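/- Alternative representation of the truncated asymptotic variance: for all n ∈ ℕ, z_{0:n−1} ∈ Z^n, m ∈ {0,…,n}, and bounded measurable h on X, the quantity T^{m,n}⟨z_{0:n−1}⟩(h) := (μ_{1_{m,n}}⟨z_{0:n−1}⟩h^{⊗2} − μ_{0_n}⟨z_{0:n−1}⟩h^{⊗2}) / (χQ⟨z_{0:n−1}⟩1_X)² satisfies T^{m,n}⟨z_{0:n−1}⟩(h) = η⟨z_{0:m−1}⟩((Q⟨z_{m:n−1}⟩h)²) / (η⟨z_{0:m−1}⟩Q⟨z_{m:n−1}⟩1_X)² − (η⟨z_{0:n−1}⟩h)², and consequently, for all ℓ ∈ {0,…,n}, σ²_ℓ⟨z_{0:n−1}⟩(h) = Σ_{m=ℓ}^{n} T^{m,n}⟨z_{0:n−1}⟩(h − η⟨z_{0:n−1}⟩h). -/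

import Mathlib

noncomputable section

section FeynmanKac
open MeasureTheory ProbabilityTheory

variable {X Z : Type*} [MeasurableSpace X] [MeasurableSpace Z]

/-- The unnormalised Feynman-Kac operator `Q⟨z_{k:k+len-1}⟩` acting on functions:
`Q⟨z_{k:m}⟩h(x) = g_{z_k}(x) ∫ Q⟨z_{k+1:m}⟩h(y) M(x,dy)`, the identity when `len = 0`. -/
def Qop (M : Kernel X X) (g : Z → X → ℝ) (z : ℕ → Z) (k len : ℕ) (h : X → ℝ) : X → ℝ :=
  (List.range len).foldr (fun i acc x => g (z (k + i)) x * ∫ y, acc y ∂(M x)) h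

/-- `γ⟨z_{0:n-1}⟩h = χQ⟨z_{0:n-1}⟩h`. -/
def gammaFK (χ : Measure X) (M : Kernel X X) (g : Z → X → ℝ) (z : ℕ → Z)
    (n : ℕ) (h : X → ℝ) : ℝ :=
  ∫ x, Qop M g z 0 n h x ∂χ

/-- The predictor functional `η⟨z_{0:n-1}⟩h = χQ⟨z_{0:n-1}⟩h / χQ⟨z_{0:n-1}⟩1`. -/
def etaFK (χ : Measure X) (M : Kernel X X) (g : Z → X → ℝ) (z : ℕ → Z)
    (n : ℕ) (h : X → ℝ) : ℝ :=
  gammaFK χ M g z n h / gammaFK χ M g z n (fun _ => 1)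

/-- The truncated asymptotic variance
`σ²_ℓ⟨z_{0:n-1}⟩(h) = Σ_{m=ℓ}^n η⟨z_{0:m-1}⟩({Q⟨z_{m:n-1}⟩(h - η⟨z_{0:n-1}⟩h)}²)
  / (η⟨z_{0:m-1}⟩Q⟨z_{m:n-1}⟩1)²`. -/
def sigmaSq (χ : Measure X) (M : Kernel X X) (g : Z → X → ℝ) (z : ℕ → Z)
    (ℓ n : ℕ) (h : X → ℝ) : ℝ :=
  ∑ m ∈ Finset.Icc ℓ n,
    etaFK χ M g z m
        (fun x => (Qop M g z m (n - m) (fun y => h y - etaFK χ M g z n h) x) ^ 2)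
      / (etaFK χ M g z m (Qop M g z m (n - m) (fun _ => 1))) ^ 2

/-- Sup norm `‖h‖_∞` of a (bounded) function. -/
def supn {Y : Type*} (h : Y → ℝ) : ℝ := sSup (Set.range fun x => |h x|)

end FeynmanKac

section CoupledFK
open MeasureTheory ProbabilityTheory

variable {X Z : Type*} [MeasurableSpace X] [MeasurableSpace Z]

/-- The coupled Feynman-Kac measure `μ_{b_{0:n}}⟨z_{0:n-1}⟩` (as an integration functional):
`μ_{b_{0:n}}⟨z_{0:n-1}⟩ f = E[f(X_n, X'_n) ∏_{m=0}^{n-1} g_{z_m}(X_m) g_{z_m}(X'_m)]`, where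
`(X_m, X'_m)` is the coupled Markov chain that starts from `χ ⊗ χ` (`b_0 = 0`) or from the
diagonal copy of `χ` (`b_0 = 1`), and whose components move conditionally independently
according to `M` when `b_{m+1} = 0` and jointly (as a single draw from `M(X_m, ·)`) when
`b_{m+1} = 1`. -/
def muB (χ : Measure X) (M : Kernel X X) (g : Z → X → ℝ) (z : ℕ → Z) (b : ℕ → Bool) :
    ℕ → (X × X → ℝ) → ℝ
  | 0, f => if b 0 then ∫ x, f (x, x) ∂χ else ∫ x, ∫ y, f (x, y) ∂χ ∂χ
  | n + 1, f =>
      muB χ M g z b n fun p =>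
        g (z n) p.1 * g (z n) p.2 *
          (if b (n + 1) then ∫ y, f (y, y) ∂(M p.1)
           else ∫ y, ∫ y', f (y, y') ∂(M p.2) ∂(M p.1))

end CoupledFK

/-! Both sides of the identity factor through the unnormalised functionals `γ_k = χQ⟨z_{0:k-1}⟩`.
Integrating out a conditionally independent step of the coupled chain applies `Q⟨z_k⟩` to each
factor of a tensor `h ⊗ h'`, so `μ_{0_n}(h ⊗ h') = γ_n h · γ_n h'`, while the single coalescence
at time `m` turns `f ⊗ f'` into `(f f') ⊗ 1`; hence
`μ_{1_{m,n}}(h ⊗ h) = γ_m 1 · γ_m((Q⟨z_{m:n-1}⟩h)²)`. Dividing by `γ_n 1² = (γ_m Q⟨z_{m:n-1}⟩1)²`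
gives the formula for `T^{m,n}`, and the variance decomposition follows because the centred
function `h - η_n h` has `η_n`-mean zero. -/

open MeasureTheory ProbabilityTheory

section BoundedMeasurable

variable {α β : Type*} [MeasurableSpace α] [MeasurableSpace β]

def BoundedMeasurable (f : α → ℝ) : Prop := Measurable f ∧ ∃ c, ∀ x, |f x| ≤ c

namespace BoundedMeasurable

lemma const (c : ℝ) : BoundedMeasurable fun _ : α => c :=
  ⟨measurable_const, |c|, fun _ => le_rfl⟩

lemma mul {f f' : α → ℝ} (hf : BoundedMeasurable f) (hf' : BoundedMeasurable f') :
    BoundedMeasurable fun x => f x * f' x := by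
  obtain ⟨hfm, c, hc⟩ := hf
  obtain ⟨hf'm, c', hc'⟩ := hf'
  refine ⟨hfm.mul hf'm, c * c', fun x => ?_⟩
  rw [abs_mul]
  exact mul_le_mul (hc x) (hc' x) (abs_nonneg _) ((abs_nonneg _).trans (hc x))

lemma integrable {f : α → ℝ} (hf : BoundedMeasurable f) (μ : Measure α)
    [IsFiniteMeasure μ] :
    Integrable f μ :=
  let ⟨hfm, c, hc⟩ := hf
  .of_bound hfm.aestronglyMeasurable c (.of_forall hc)

lemma integral_kernel {f : β → ℝ} (hf : BoundedMeasurable f) (κ : Kernel α β)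
    [IsMarkovKernel κ] : BoundedMeasurable fun x => ∫ y, f y ∂κ x := by
  obtain ⟨hfm, c, hc⟩ := hf
  refine ⟨hfm.stronglyMeasurable.integral_kernel.measurable, c, fun x => ?_⟩
  simpa using norm_integral_le_of_norm_le_const (μ := κ x)
    (.of_forall fun y => (Real.norm_eq_abs (f y)).trans_le (hc y))

end BoundedMeasurable

end BoundedMeasurable

section FeynmanKacOperator

variable {X Z : Type*} [MeasurableSpace X] (M : Kernel X X) (g : Z → X → ℝ) (z : ℕ → Z)

@[simp]
lemma Qop_zero (k : ℕ) (h : X → ℝ) : Qop M g z k 0 h = h := rfl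

lemma Qop_succ (k len : ℕ) (h : X → ℝ) :
    Qop M g z k (len + 1) h = fun x => g (z k) x * ∫ y, Qop M g z (k + 1) len h y ∂M x := by
  simp only [Qop, List.range_succ_eq_map, List.foldr_cons, List.foldr_map, Nat.add_zero,
    Nat.add_right_comm k 1, Nat.add_assoc]

lemma Qop_one (k : ℕ) (h : X → ℝ) :
    Qop M g z k 1 h = fun x => g (z k) x * ∫ y, h y ∂M x :=
  Qop_succ M g z k 0 h

lemma Qop_add (k a b : ℕ) (h : X → ℝ) :
    Qop M g z k a (Qop M g z (k + a) b h) = Qop M g z k (a + b) h := by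
  induction a generalizing k with
  | zero => simp
  | succ a ih =>
    rw [Nat.add_right_comm, Qop_succ, Qop_succ, ← ih (k + 1),
      show k + 1 + a = k + (a + 1) by omega]

lemma Qop_const_mul (k len : ℕ) (c : ℝ) (h : X → ℝ) :
    Qop M g z k len (fun x => c * h x) = fun x => c * Qop M g z k len h x := by
  induction len generalizing k with
  | zero => rfl
  | succ len ih =>
    funext x
    rw [Qop_succ, Qop_succ, ih]
    dsimp only
    rw [integral_const_mul]
    ring

variable [IsMarkovKernel M] (hg : ∀ ζ, BoundedMeasurable (g ζ))
include hg

lemma BoundedMeasurable.Qop {h : X → ℝ} (hh : BoundedMeasurable h) (k len : ℕ) :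
    BoundedMeasurable (Qop M g z k len h) := by
  induction len generalizing k with
  | zero => exact hh
  | succ len ih =>
    rw [Qop_succ]
    exact (hg _).mul ((ih (k + 1)).integral_kernel M)

lemma Qop_sub {h h' : X → ℝ} (hh : BoundedMeasurable h) (hh' : BoundedMeasurable h')
    (k len : ℕ) :
    Qop M g z k len (fun x => h x - h' x)
      = fun x => Qop M g z k len h x - Qop M g z k len h' x := by
  induction len generalizing k with
  | zero => rfl
  | succ len ih =>
    funext x
    rw [Qop_succ, Qop_succ, Qop_succ, ih]
    dsimp only
    rw [integral_sub ((hh.Qop M g z hg _ _).integrable _)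
      ((hh'.Qop M g z hg _ _).integrable _)]
    ring

end FeynmanKacOperator

section FeynmanKacFunctionals

variable {X Z : Type*} [MeasurableSpace X] (M : Kernel X X) (g : Z → X → ℝ) (z : ℕ → Z)
  (χ : Measure X)

lemma gammaFK_Qop (m len : ℕ) (h : X → ℝ) :
    gammaFK χ M g z m (Qop M g z m len h) = gammaFK χ M g z (m + len) h := by
  simp only [gammaFK, ← Qop_add M g z 0 m len, Nat.zero_add]

variable [IsMarkovKernel M] {g} (hg : ∀ ζ, BoundedMeasurable (g ζ))
include hg

lemma gammaFK_sub_const [IsFiniteMeasure χ] {h : X → ℝ} (hh : BoundedMeasurable h) (n : ℕ)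
    (c : ℝ) :
    gammaFK χ M g z n (fun x => h x - c)
      = gammaFK χ M g z n h - c * gammaFK χ M g z n (fun _ => 1) := by
  have hc : (fun _ : X => c) = fun _ => c * 1 := by simp
  rw [gammaFK, Qop_sub M g z hg hh (.const c), hc, Qop_const_mul, integral_sub
    ((hh.Qop M g z hg 0 n).integrable χ)
    ((((BoundedMeasurable.const 1).Qop M g z hg 0 n).integrable χ).const_mul c),
    integral_const_mul]
  rfl

lemma etaFK_sub_etaFK_self [IsFiniteMeasure χ] {h : X → ℝ} (hh : BoundedMeasurable h)
    (n : ℕ) :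
    etaFK χ M g z n (fun x => h x - etaFK χ M g z n h) = 0 := by
  rw [etaFK, gammaFK_sub_const M z χ hg hh, etaFK]
  rcases eq_or_ne (gammaFK χ M g z n (fun _ => 1)) 0 with h0 | h0
  · simp [h0]
  · field_simp
    ring

end FeynmanKacFunctionals

section CoupledFeynmanKac

variable {X Z : Type*} [MeasurableSpace X] (M : Kernel X X) (g : Z → X → ℝ) (z : ℕ → Z)
  (χ : Measure X) {b : ℕ → Bool}

lemma muB_succ_tensor_of_false {n : ℕ} (hb : b (n + 1) = false) (h h' : X → ℝ) :
    muB χ M g z b (n + 1) (fun p => h p.1 * h' p.2)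
      = muB χ M g z b n (fun p => Qop M g z n 1 h p.1 * Qop M g z n 1 h' p.2) := by
  simp only [muB, hb, Bool.false_eq_true, if_false, Qop_one, integral_const_mul,
    integral_mul_const]
  congr 1
  funext p
  ring

lemma muB_succ_tensor_of_true [IsMarkovKernel M] {n : ℕ} (hb : b (n + 1) = true)
    (h h' : X → ℝ) :
    muB χ M g z b (n + 1) (fun p => h p.1 * h' p.2)
      = muB χ M g z b n
          (fun p => Qop M g z n 1 (fun x => h x * h' x) p.1 * Qop M g z n 1 (fun _ => 1) p.2) := by
  simp only [muB, hb, if_true, Qop_one, integral_const, probReal_univ, smul_eq_mul, mul_one]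
  congr 1
  funext p
  ring

lemma muB_tensor_of_forall_false {n : ℕ} (hb : ∀ i ≤ n, b i = false) (h h' : X → ℝ) :
    muB χ M g z b n (fun p => h p.1 * h' p.2) = gammaFK χ M g z n h * gammaFK χ M g z n h' := by
  induction n generalizing h h' with
  | zero =>
    simp [muB, hb 0 le_rfl, gammaFK, integral_const_mul, integral_mul_const]
  | succ n ih =>
    rw [muB_succ_tensor_of_false M g z χ (hb _ le_rfl), ih (fun i hi => hb i (by omega)),
      gammaFK_Qop, gammaFK_Qop]

lemma muB_add_tensor {m j : ℕ} (hb : ∀ i, m < i → i ≤ m + j → b i = false)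
    (h h' : X → ℝ) :
    muB χ M g z b (m + j) (fun p => h p.1 * h' p.2)
      = muB χ M g z b m (fun p => Qop M g z m j h p.1 * Qop M g z m j h' p.2) := by
  induction j generalizing h h' with
  | zero => rfl
  | succ j ih =>
    rw [← Nat.add_assoc, muB_succ_tensor_of_false M g z χ (hb (m + j + 1) (by omega) (by omega)),
      ih (fun i h₁ h₂ => hb i h₁ (by omega)), Qop_add, Qop_add]

lemma muB_tensor_of_eq_true [IsMarkovKernel M] [IsProbabilityMeasure χ] {m : ℕ}
    (hm : b m = true) (hb : ∀ i < m, b i = false) (h h' : X → ℝ) :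
    muB χ M g z b m (fun p => h p.1 * h' p.2)
      = gammaFK χ M g z m (fun _ => 1) * gammaFK χ M g z m (fun x => h x * h' x) := by
  cases m with
  | zero => simp [muB, hm, gammaFK]
  | succ k =>
    rw [muB_succ_tensor_of_true M g z χ hm, muB_tensor_of_forall_false M g z χ
      (fun i hi => hb i (by omega)), gammaFK_Qop, gammaFK_Qop, mul_comm]

end CoupledFeynmanKac

section Thm
open MeasureTheory ProbabilityTheory

variable {X Z : Type*} [MeasurableSpace X] [MeasurableSpace Z]

/-- `T^{m,n}⟨z_{0:n-1}⟩(h) := (μ_{1_{m,n}}⟨z_{0:n-1}⟩h^{⊗2} - μ_{0_n}⟨z_{0:n-1}⟩h^{⊗2})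
  / (χQ⟨z_{0:n-1}⟩1)²`. -/
def Tterm (χ : Measure X) (M : Kernel X X) (g : Z → X → ℝ) (z : ℕ → Z)
    (m n : ℕ) (h : X → ℝ) : ℝ :=
  (muB χ M g z (fun l => decide (l = m)) n (fun p => h p.1 * h p.2)
      - muB χ M g z (fun _ => false) n (fun p => h p.1 * h p.2))
    / (gammaFK χ M g z n (fun _ => 1)) ^ 2

variable {M : Kernel X X} {g : Z → X → ℝ} {z : ℕ → Z} {χ : Measure X}

omit [MeasurableSpace Z] in
lemma Tterm_eq_etaFK [IsMarkovKernel M] [IsProbabilityMeasure χ] {m n : ℕ} (hmn : m ≤ n)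
    (h : X → ℝ) :
    Tterm χ M g z m n h
      = etaFK χ M g z m (fun x => (Qop M g z m (n - m) h x) ^ 2)
          / (etaFK χ M g z m (Qop M g z m (n - m) (fun _ => 1))) ^ 2
        - (etaFK χ M g z n h) ^ 2 := by
  obtain ⟨j, rfl⟩ := Nat.exists_eq_add_of_le hmn
  have hcoalesced : muB χ M g z (fun l => decide (l = m)) (m + j) (fun p => h p.1 * h p.2)
      = gammaFK χ M g z m (fun _ => 1) * gammaFK χ M g z m (fun x => Qop M g z m j h x ^ 2) := by
    rw [muB_add_tensor M g z χ (fun i hi _ => by simp; omega),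
      muB_tensor_of_eq_true M g z χ (by simp) (fun i hi => by simp; omega)]
    simp only [sq]
  have hindependent : muB χ M g z (fun _ => false) (m + j) (fun p => h p.1 * h p.2)
      = gammaFK χ M g z (m + j) h ^ 2 := by
    rw [muB_tensor_of_forall_false M g z χ (fun _ _ => rfl), sq]
  simp only [Tterm, etaFK, hcoalesced, hindependent, gammaFK_Qop, Nat.add_sub_cancel_left]
  -- `(a A - B²) / c² = (A / a) / (c / a)² - (B / c)²` holds for all reals, as `x / 0 = 0`
  field_simp

/-- **Alternative representation of the truncated asymptotic variance** (display (11) of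
Olsson & Douc): for all `n`, `z_{0:n-1}`, `m ∈ {0,…,n}` and bounded measurable `h`,
`T^{m,n}⟨z_{0:n-1}⟩(h) = η⟨z_{0:m-1}⟩((Q⟨z_{m:n-1}⟩h)²)/(η⟨z_{0:m-1}⟩Q⟨z_{m:n-1}⟩1)²
  - (η⟨z_{0:n-1}⟩h)²`, and consequently, for all `ℓ ∈ {0,…,n}`,
`σ²_ℓ⟨z_{0:n-1}⟩(h) = Σ_{m=ℓ}^n T^{m,n}⟨z_{0:n-1}⟩(h - η⟨z_{0:n-1}⟩h)`. -/
theorem variance_alternative_representation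
    (M : Kernel X X) [IsMarkovKernel M] (χ : Measure X) [IsProbabilityMeasure χ]
    (g : Z → X → ℝ) (hgmeas : ∀ zz, Measurable (g zz))
    (hgpos : ∀ zz x, 0 < g zz x) (hgbdd : ∀ zz, ∃ c, ∀ x, g zz x ≤ c)
    (z : ℕ → Z) (n : ℕ) (h : X → ℝ) (hh : Measurable h) (hhbdd : ∃ c, ∀ x, |h x| ≤ c) :
    (∀ m ≤ n,
      Tterm χ M g z m n h
        = etaFK χ M g z m (fun x => (Qop M g z m (n - m) h x) ^ 2)
            / (etaFK χ M g z m (Qop M g z m (n - m) (fun _ => 1))) ^ 2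
          - (etaFK χ M g z n h) ^ 2)
    ∧ ∀ ℓ ≤ n,
        sigmaSq χ M g z ℓ n h
          = ∑ m ∈ Finset.Icc ℓ n,
              Tterm χ M g z m n (fun y => h y - etaFK χ M g z n h) := by
  have hg : ∀ ζ, BoundedMeasurable (g ζ) := fun ζ =>
    let ⟨c, hc⟩ := hgbdd ζ
    ⟨hgmeas ζ, c, fun x => (abs_of_pos (hgpos ζ x)).trans_le (hc x)⟩
  refine ⟨fun m hm => Tterm_eq_etaFK hm h, fun ℓ _ => Finset.sum_congr rfl fun m hm => ?_⟩
  rw [Tterm_eq_etaFK (Finset.mem_Icc.1 hm).2, etaFK_sub_etaFK_self M z χ hg ⟨hh, hhbdd⟩]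
  simp

end Thm
end
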